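/- Let S be a string and let S[a₁..b₁] and S[a₂..b₂] be two distinct ρ-periodic runs of S with a₁ ≤ a₂ ≤ b₁ (the two runs overlap). Then their overlap has fewer than ρ positions, i.e., b₁ − a₂ + 1 < ρ. -/
import Mathlib


variable {α : Type*}

/-- `sub S i j` is the substring `S[i..j]` (1-indexed, inclusive endpoints). -/
def sub (S : List α) (i j : ℕ) : List α := (S.take j).drop (i - 1)

/-- `ρ` is a period of `T`: `1 ≤ ρ` and `T[i] = T[i+ρ]` for all valid `i`. -/
def IsPeriod (T : List α) (ρ : ℕ) : Prop :=
  1 ≤ ρ ∧ ∀ i : ℕ, i + ρ < T.length → T[i]? = T[i + ρ]?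

/-- The minimal period of `T`. -/
noncomputable def per (T : List α) : ℕ := sInf {ρ : ℕ | IsPeriod T ρ}

/-- `S[ℓ..r]` is a `ρ`-periodic run of `S`. -/
def IsRun (S : List α) (ρ ℓ r : ℕ) : Prop :=
  1 ≤ ℓ ∧ ℓ ≤ r ∧ r ≤ S.length ∧
  per (sub S ℓ r) = ρ ∧ 2 * ρ ≤ r - ℓ + 1 ∧
  ∀ ℓ' r' : ℕ, 1 ≤ ℓ' → ℓ' ≤ ℓ → r ≤ r' → r' ≤ S.length →
    per (sub S ℓ' r') = ρ → 2 * ρ ≤ r' - ℓ' + 1 → ℓ' = ℓ ∧ r' = r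

lemma sub_length (S : List α) {ℓ r : ℕ} (h1 : 1 ≤ ℓ) (h2 : ℓ ≤ r) (h3 : r ≤ S.length) :
    (sub S ℓ r).length = r - ℓ + 1 := by
  simp [sub]; omega

lemma getElem?_sub (S : List α) {ℓ r i : ℕ} (h : ℓ - 1 + i < r) :
    (sub S ℓ r)[i]? = S[ℓ - 1 + i]? := by
  simp [sub, List.getElem?_drop, List.getElem?_take, h]

lemma isPeriod_nonempty (T : List α) : {ρ : ℕ | IsPeriod T ρ}.Nonempty :=
  ⟨T.length + 1, Nat.le_add_left 1 _, fun i hi => by omega⟩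

lemma isPeriod_per (T : List α) : IsPeriod T (per T) :=
  Nat.sInf_mem (isPeriod_nonempty T)

lemma per_le {T : List α} {ρ : ℕ} (h : IsPeriod T ρ) : per T ≤ ρ :=
  Nat.sInf_le h

/-- A period of a substring restricts to sub-substrings. -/
lemma isPeriod_restrict (S : List α) {ℓ r ℓ' r' p : ℕ}
    (h1 : 1 ≤ ℓ) (h2 : ℓ ≤ ℓ') (h3 : ℓ' ≤ r') (h4 : r' ≤ r) (h5 : r ≤ S.length)
    (hp : IsPeriod (sub S ℓ r) p) : IsPeriod (sub S ℓ' r') p := by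
  refine ⟨hp.1, fun i hi => ?_⟩
  rw [sub_length S (by omega) h3 (by omega)] at hi
  rw [getElem?_sub S (by omega), getElem?_sub S (by omega)]
  have key := hp.2 (ℓ' - 1 + i - (ℓ - 1)) (by
    rw [sub_length S h1 (by omega) h5]; omega)
  rw [getElem?_sub S (by omega), getElem?_sub S (by omega)] at key
  have e1 : ℓ - 1 + (ℓ' - 1 + i - (ℓ - 1)) = ℓ' - 1 + i := by omega
  have e2 : ℓ - 1 + (ℓ' - 1 + i - (ℓ - 1) + p) = ℓ' - 1 + (i + p) := by omega
  rw [e1, e2] at key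
  exact key

/-- Gluing two overlapping periodic substrings (overlap at least `ρ`). -/
lemma isPeriod_glue (S : List α) {ρ a₁ b₁ a₂ b₂ : ℕ}
    (h1 : 1 ≤ a₁) (h2 : a₁ ≤ a₂) (h3 : a₂ ≤ b₁) (h4 : b₁ ≤ b₂) (h5 : b₂ ≤ S.length)
    (hov : ρ ≤ b₁ - a₂ + 1)
    (hp1 : IsPeriod (sub S a₁ b₁) ρ) (hp2 : IsPeriod (sub S a₂ b₂) ρ) :
    IsPeriod (sub S a₁ b₂) ρ := by
  refine ⟨hp1.1, fun i hi => ?_⟩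
  rw [sub_length S h1 (by omega) h5] at hi
  rw [getElem?_sub S (by omega), getElem?_sub S (by omega)]
  by_cases hc : a₁ - 1 + i + ρ < b₁
  · have key := hp1.2 i (by rw [sub_length S h1 (by omega) (by omega)]; omega)
    rw [getElem?_sub S (by omega), getElem?_sub S (by omega)] at key
    exact key
  · have key := hp2.2 (a₁ - 1 + i - (a₂ - 1)) (by
      rw [sub_length S (by omega) (by omega) h5]; omega)
    rw [getElem?_sub S (by omega), getElem?_sub S (by omega)] at key
    have e1 : a₂ - 1 + (a₁ - 1 + i - (a₂ - 1)) = a₁ - 1 + i := by omega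
    have e2 : a₂ - 1 + (a₁ - 1 + i - (a₂ - 1) + ρ) = a₁ - 1 + (i + ρ) := by omega
    rw [e1, e2] at key
    exact key

/-- Two distinct overlapping `ρ`-periodic runs `S[a₁..b₁]` and `S[a₂..b₂]`
(with `a₁ ≤ a₂ ≤ b₁`) overlap by fewer than `ρ` positions. -/
theorem stmt9 (S : List α) (ρ a₁ b₁ a₂ b₂ : ℕ)
    (h1 : IsRun S ρ a₁ b₁) (h2 : IsRun S ρ a₂ b₂)
    (hne : (a₁, b₁) ≠ (a₂, b₂)) (ha : a₁ ≤ a₂) (hb : a₂ ≤ b₁) :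
    b₁ - a₂ + 1 < ρ := by
  by_contra hcon
  push_neg at hcon
  obtain ⟨hℓ1, hlr1, hrS1, hper1, hlen1, hmax1⟩ := h1
  obtain ⟨hℓ2, hlr2, hrS2, hper2, hlen2, hmax2⟩ := h2
  by_cases hbb : b₂ ≤ b₁
  · obtain ⟨e1, e2⟩ := hmax2 a₁ b₁ hℓ1 ha hbb hrS1 hper1 hlen1
    exact hne (by simp [e1, e2])
  · push_neg at hbb
    have hρ1 : IsPeriod (sub S a₁ b₁) ρ := hper1 ▸ isPeriod_per _
    have hρ2 : IsPeriod (sub S a₂ b₂) ρ := hper2 ▸ isPeriod_per _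
    have hglue : IsPeriod (sub S a₁ b₂) ρ :=
      isPeriod_glue S hℓ1 ha hb (by omega) hrS2 hcon hρ1 hρ2
    have hperU : per (sub S a₁ b₂) = ρ := by
      have hle : per (sub S a₁ b₂) ≤ ρ := per_le hglue
      have hp := isPeriod_per (sub S a₁ b₂)
      have hr : IsPeriod (sub S a₁ b₁) (per (sub S a₁ b₂)) :=
        isPeriod_restrict S hℓ1 le_rfl hlr1 (by omega) hrS2 hp
      have := per_le hr
      omega
    obtain ⟨_, e2⟩ := hmax1 a₁ b₂ hℓ1 le_rfl (by omega) hrS2 hperU (by omega)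
    omega
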